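/- Let g ∈ 𝒢_n with n ≥ 1. Then the number of uphills in 𝒢⁺ with first letter 1 and last letter g is exactly 2ⁿ, the number of downhills with first letter g and last letter 1 is exactly 2ⁿ, and the number of mountains with peak g is exactly 2^{2n}. -/

import Mathlib

set_option autoImplicit false

universe u v

namespace Paper

/-- Anchors: `A = X ∪ X' ∪ {1}`. -/
inductive Anchor (X : Type u) : Type u where
  | one : Anchor X
  | pos : X → Anchor X
  | neg : X → Anchor X

namespace Anchor

/-- The involution `'` on anchors. -/
def inv {X : Type u} : Anchor X → Anchor X
  | .one => .one
  | .pos x => .neg x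
  | .neg x => .pos x

end Anchor

/-- Formal expressions for the `5`-tuples: `one` is `1`, `base x` is `g_{xx'}`, and
`node l a c b r` is the tuple `(l, a, c, b, r)`. -/
inductive G5 (X : Type u) : Type u where
  | one : G5 X
  | base : X → G5 X
  | node : G5 X → Anchor X → G5 X → Anchor X → G5 X → G5 X

namespace G5

variable {X : Type u}

/-- left entry `g^l` -/
def lt : G5 X → G5 X
  | .node l _ _ _ _ => l
  | _ => .one

/-- right entry `g^r` -/
def rt : G5 X → G5 X
  | .node _ _ _ _ r => r
  | _ => .one

/-- middle entry `g^c` -/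
def ct : G5 X → G5 X
  | .node _ _ c _ _ => c
  | _ => .one

/-- left anchor `g^{la}` -/
def la : G5 X → Anchor X
  | .node _ a _ _ _ => a
  | _ => .one

/-- right anchor `g^{ra}` -/
def ra : G5 X → Anchor X
  | .node _ _ _ b _ => b
  | .base x => .neg x
  | .one => .one

/-- the height `↑(g)` -/
def ht : G5 X → ℕ
  | .one => 0
  | .base _ => 1
  | .node l _ _ _ _ => ht l + 1

/-- membership in `𝒢_{i,e}` -/
inductive MemE : G5 X → ℕ → Prop where
  | base (x : X) : MemE (.base x) 1
  | stepL {g : G5 X} {i : ℕ} (h : MemE g i) :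
      MemE (.node g g.la.inv g.lt g.ra.inv g) (i + 1)
  | stepR {g : G5 X} {i : ℕ} (h : MemE g i) :
      MemE (.node g g.ra.inv g.lt g.la.inv g) (i + 1)

mutual
  /-- membership in `𝒢_{i,d}` -/
  inductive MemD : G5 X → ℕ → Prop where
    | mk {l c r : G5 X} {a b : Anchor X} {i : ℕ}
        (hl : Mem l (i + 1)) (hc : Mem c i) (hr : Mem r (i + 1)) (hne : l ≠ r)
        (hla : (c = l.lt ∧ a = l.la.inv) ∨ (c = l.rt ∧ a = l.ra.inv))
        (hrb : (c = r.lt ∧ b = r.la.inv) ∨ (c = r.rt ∧ b = r.ra.inv)) :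
        MemD (.node l a c b r) (i + 2)

  /-- membership in `𝒢_i` (with `𝒢_0 = {1}` and `𝒢_i = 𝒢_{i,e} ∪ 𝒢_{i,d}` for `i ≥ 1`) -/
  inductive Mem : G5 X → ℕ → Prop where
    | one : Mem .one 0
    | ofE {g : G5 X} {i : ℕ} (h : MemE g i) : Mem g i
    | ofD {g : G5 X} {i : ℕ} (h : MemD g i) : Mem g i
end

/-- `g ∈ 𝒢' = 𝒢^5 ∪ {1}` -/
def InG' (g : G5 X) : Prop := ∃ i, Mem g i

/-- `g ∈ 𝒢^5 = ⋃_{i ≥ 1} 𝒢_i` -/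
def IsTup (g : G5 X) : Prop := ∃ i, 1 ≤ i ∧ Mem g i

end G5

/-- The alphabet `𝒢 = 𝒢^5 ∪ A` (the symbol `1` is the anchor `1`). -/
def Letter (X : Type u) : Type u := Anchor X ⊕ {g : G5 X // g.IsTup}

/-- `𝒢⁺`, the free semigroup on `𝒢`. -/
abbrev W (X : Type u) := FreeSemigroup (Letter X)

/-- the one-letter word given by an anchor -/
def wA {X : Type u} (a : Anchor X) : W X := FreeSemigroup.of (Sum.inl a)

open Classical in
/-- the one-letter word given by an element of `𝒢'` (the element `1` of `𝒢'` is the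
same letter as the anchor `1`) -/
noncomputable def wG {X : Type u} (g : G5 X) : W X :=
  if h : g.IsTup then FreeSemigroup.of (Sum.inr ⟨g, h⟩) else wA Anchor.one

/-- the three-letter word `g^L = (g^{la})' g^l g^{la}` -/
noncomputable def wL {X : Type u} (g : G5 X) : W X := wA g.la.inv * wG g.lt * wA g.la

/-- the three-letter word `g^R = (g^{ra})' g^r g^{ra}` -/
noncomputable def wR {X : Type u} (g : G5 X) : W X := wA g.ra.inv * wG g.rt * wA g.ra

/-- The generating pairs of the congruence `ρ`. -/
inductive Rel {X : Type u} : W X → W X → Prop where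
  | xinvx (x : X) : Rel (wA (.pos x) * wA (.neg x) * wA (.pos x)) (wA (.pos x))
  | invxinv (x : X) : Rel (wA (.neg x) * wA (.pos x) * wA (.neg x)) (wA (.neg x))
  | gbase (x : X) : Rel (wG (.base x)) (wA (.pos x) * wA (.neg x))
  | one_mul {g : G5 X} (h : g.InG') : Rel (wA .one * wG g) (wG g)
  | mul_one {g : G5 X} (h : g.InG') : Rel (wG g * wA .one) (wG g)
  | idem {g : G5 X} (h : g.InG') : Rel (wG g * wG g) (wG g)
  | cLg {g : G5 X} {i : ℕ} (h : G5.Mem g i) (h2 : 2 ≤ i) :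
      Rel (wG g.ct * wL g * wG g) (wG g)
  | gRc {g : G5 X} {i : ℕ} (h : G5.Mem g i) (h2 : 2 ≤ i) :
      Rel (wG g * wR g * wG g.ct) (wG g)
  | RgL {g : G5 X} {i : ℕ} (h : G5.Mem g i) (h2 : 2 ≤ i) :
      Rel (wR g * wG g * wL g) (wR g * wG g.ct * wL g)

/-- The congruence `ρ` generated by `Rel`. -/
def rho (X : Type u) : Con (W X) := conGen Rel

/-- `F°(X) = 𝒢⁺/ρ`. -/
abbrev Fo (X : Type u) := (rho X).Quotient

/-- `[u]`, the `ρ`-class of a word `u ∈ 𝒢⁺`. -/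
def cl {X : Type u} (u : W X) : Fo X := u

/-- left anchored triplet -/
def LeftAnch {X : Type u} (g1 : G5 X) (a : Anchor X) (g2 : G5 X) : Prop :=
  (g1 = g2.lt ∧ a = g2.la) ∨ (g1 = g2.rt ∧ a = g2.ra)

/-- right anchored triplet -/
def RightAnch {X : Type u} (g1 : G5 X) (a : Anchor X) (g2 : G5 X) : Prop :=
  (g2 = g1.lt ∧ a = g1.la.inv) ∨ (g2 = g1.rt ∧ a = g1.ra.inv)

/-- anchored triplet -/
def Anch {X : Type u} (g1 : G5 X) (a : Anchor X) (g2 : G5 X) : Prop :=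
  LeftAnch g1 a g2 ∨ RightAnch g1 a g2

/-- A (potential) landscape `g₀a₁g₁⋯aₙgₙ`, recorded as its first letter `g₀` together
with the list of pairs `(a₁,g₁), …, (aₙ,gₙ)`. -/
structure Landscape (X : Type u) : Type u where
  head : G5 X
  tail : List (Anchor X × G5 X)

/-- last letter of `g :: (map snd l)` -/
def endAt {X : Type u} (g : G5 X) (l : List (Anchor X × G5 X)) : G5 X :=
  (l.map Prod.snd).getLastD g

/-- every consecutive triplet is anchored -/
def ChainAnch {X : Type u} : G5 X → List (Anchor X × G5 X) → Prop
  | _, [] => True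
  | g, (a, h) :: rest => Anch g a h ∧ ChainAnch h rest

/-- heights increase by one at each step -/
def ChainUp {X : Type u} : G5 X → List (Anchor X × G5 X) → Prop
  | _, [] => True
  | g, (_, h) :: rest => G5.ht h = G5.ht g + 1 ∧ ChainUp h rest

/-- heights decrease by one at each step -/
def ChainDown {X : Type u} : G5 X → List (Anchor X × G5 X) → Prop
  | _, [] => True
  | g, (_, h) :: rest => G5.ht h + 1 = G5.ht g ∧ ChainDown h rest

/-- the maximal ascending prefix -/
def upPre {X : Type u} : G5 X → List (Anchor X × G5 X) → List (Anchor X × G5 X)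
  | _, [] => []
  | g, (a, h) :: rest => if G5.ht h = G5.ht g + 1 then (a, h) :: upPre h rest else []

namespace Landscape

variable {X : Type u}

/-- the letters subsequence `g₀g₁⋯gₙ` -/
def letters (L : Landscape X) : List (G5 X) := L.head :: L.tail.map Prod.snd

/-- the anchors subsequence `a₁⋯aₙ` -/
def anchors (L : Landscape X) : List (Anchor X) := L.tail.map Prod.fst

/-- the word `g₀a₁g₁⋯aₙgₙ ∈ 𝒢⁺` -/
noncomputable def word (L : Landscape X) : W X :=
  L.tail.foldl (fun w p => w * wA p.1 * wG p.2) (wG L.head)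

/-- the last letter `gₙ` -/
def last (L : Landscape X) : G5 X := endAt L.head L.tail

/-- `L` is a landscape: all letters in `𝒢'` and all triplets anchored -/
def IsLandscape (L : Landscape X) : Prop :=
  (∀ g ∈ L.letters, g.InG') ∧ ChainAnch L.head L.tail

/-- `L` is an uphill -/
def IsUphill (L : Landscape X) : Prop := L.IsLandscape ∧ ChainUp L.head L.tail

/-- `L` is a downhill -/
def IsDownhill (L : Landscape X) : Prop := L.IsLandscape ∧ ChainDown L.head L.tail

/-- `L` is an uphill followed by a downhill -/
def IsUpDown (L : Landscape X) : Prop :=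
  L.IsLandscape ∧ ∃ utl dtl, L.tail = utl ++ dtl ∧
    ChainUp L.head utl ∧ ChainDown (endAt L.head utl) dtl

/-- `L` is a mountain -/
def IsMountain (L : Landscape X) : Prop :=
  L.IsLandscape ∧ L.head = G5.one ∧
    (L.tail = [] ∨
      ∃ utl dtl, L.tail = utl ++ dtl ∧ utl ≠ [] ∧ dtl ≠ [] ∧
        ChainUp L.head utl ∧ ChainDown (endAt L.head utl) dtl ∧ L.last = G5.one)

/-- `λ_l(L)`, the maximal uphill prefix -/
def lamL (L : Landscape X) : Landscape X := ⟨L.head, upPre L.head L.tail⟩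

/-- landscape from a list of letters and a list of anchors -/
def mk' (gs : List (G5 X)) (as : List (Anchor X)) : Landscape X :=
  ⟨gs.headD G5.one, as.zip gs.tail⟩

/-- the reverse landscape `L⃖ = gₙaₙ'g_{n-1}⋯a₁'g₀` -/
def rev (L : Landscape X) : Landscape X :=
  mk' L.letters.reverse (L.anchors.reverse.map Anchor.inv)

/-- `λ_r(L)`, the maximal downhill suffix -/
def lamR (L : Landscape X) : Landscape X := L.rev.lamL.rev

/-- the peak `κ(L)` of a mountain -/
def peak (L : Landscape X) : G5 X := L.lamL.last

/-- the word of `L` with its first letter removed -/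
noncomputable def tailWord (L : Landscape X) : W X :=
  match L.tail with
  | [] => wA Anchor.one
  | (a, h) :: rest => rest.foldl (fun w p => w * wA p.1 * wG p.2) (wA a * wG h)

/-- `L * M` : the concatenation of the two words without repeating the common letter
`L.last = M.head` at the junction -/
noncomputable def star (L M : Landscape X) : W X :=
  match M.tail with
  | [] => L.word
  | _ :: _ => L.word * M.tailWord

end Landscape

/-- the ground `ε(g)` of `g ∈ 𝒢'` -/
def ground {X : Type u} : G5 X → Set (G5 X)
  | .one => {G5.one}
  | .base x => {G5.one, G5.base x}
  | .node l a c b r => ground l ∪ {G5.node l a c b r} ∪ ground r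

/-- the ground `ε(L)` of a landscape -/
def Landscape.grd {X : Type u} (L : Landscape X) : Set (G5 X) :=
  {h | ∃ g ∈ L.letters, h ∈ ground g}

section Green

variable {X : Type u}

/-- `s ≤_R t`, i.e. `sM ⊆ tM` -/
def leR (s t : Fo X) : Prop := ∀ z : Fo X, (∃ m, z = s * m) → ∃ m, z = t * m

/-- `s ≤_L t`, i.e. `Ms ⊆ Mt` -/
def leL (s t : Fo X) : Prop := ∀ z : Fo X, (∃ m, z = m * s) → ∃ m, z = m * t

/-- `s ≤_J t`, i.e. `MsM ⊆ MtM` -/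
def leJ (s t : Fo X) : Prop :=
  ∀ z : Fo X, (∃ m m', z = m * s * m') → ∃ m m', z = m * t * m'

/-- Green's relation `R` -/
def RRel (s t : Fo X) : Prop := leR s t ∧ leR t s

/-- Green's relation `L` -/
def LRel (s t : Fo X) : Prop := leL s t ∧ leL t s

/-- Green's relation `J` -/
def JRel (s t : Fo X) : Prop := leJ s t ∧ leJ t s

/-- Green's relation `H` -/
def HRel (s t : Fo X) : Prop := RRel s t ∧ LRel s t

/-- Green's relation `D = R ∘ L` -/
def DRel (s t : Fo X) : Prop := ∃ w, RRel s w ∧ LRel w t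

end Green

/-- `u` is a prefix of `v` -/
def WPrefix {X : Type u} (u v : W X) : Prop := u = v ∨ ∃ w, u * w = v

/-- `u` is a suffix of `v` -/
def WSuffix {X : Type u} (u v : W X) : Prop := u = v ∨ ∃ w, w * u = v

/-- the sandwich set `S(e,f)` of two idempotents -/
def sandwichSet {S : Type v} [Mul S] (e f : S) : Set S :=
  {g | g * g = g ∧ f * g = g ∧ g * e = g ∧ e * g * f = e * f}

/-- a regular semigroup -/
def IsRegular (S : Type v) [Mul S] : Prop :=
  ∀ s : S, ∃ t : S, s * t * s = s ∧ t * s * t = t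

/-- a subsemigroup which is a regular semigroup on its own -/
def RegularIn {S : Type v} [Semigroup S] (T : Subsemigroup S) : Prop :=
  ∀ t ∈ T, ∃ t' ∈ T, t * t' * t = t ∧ t' * t * t' = t'

/-- `S` is weakly generated by `Y`: no proper regular subsemigroup contains `Y` -/
def WeaklyGen {S : Type v} [Semigroup S] (Y : Set S) : Prop :=
  ∀ T : Subsemigroup S, RegularIn T → Y ⊆ ↑T → T = ⊤

section Skeleton

variable {X : Type u} {S : Type v} [Semigroup S]

open Classical in
/-- the value of `φ : 𝒢 → S¹` at an element `g` of `𝒢'` -/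
noncomputable def appG (φ : Letter X → WithOne S) (g : G5 X) : WithOne S :=
  if h : g.IsTup then φ (Sum.inr ⟨g, h⟩) else φ (Sum.inl Anchor.one)

/-- the value of `φ : 𝒢 → S¹` at an anchor -/
def appA (φ : Letter X → WithOne S) (a : Anchor X) : WithOne S := φ (Sum.inl a)

/-- `g^{φ,l} = (g^cφ)((g^{la})'φ)(g^lφ)(g^{la}φ)` -/
noncomputable def phiL (φ : Letter X → WithOne S) (g : G5 X) : WithOne S :=
  appG φ g.ct * appA φ g.la.inv * appG φ g.lt * appA φ g.la

/-- `g^{φ,r} = ((g^{ra})'φ)(g^rφ)(g^{ra}φ)(g^cφ)` -/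
noncomputable def phiR (φ : Letter X → WithOne S) (g : G5 X) : WithOne S :=
  appA φ g.ra.inv * appG φ g.rt * appA φ g.ra * appG φ g.ct

/-- `φ : 𝒢 → S¹` is a skeleton mapping (condition (iii) uses the sandwich set of
two not-necessarily-idempotent elements: `S(a,b) = S(a*a, bb*)` for inverses `a*`, `b*`) -/
def IsSkeleton (φ : Letter X → WithOne S) : Prop :=
  (∀ x : X,
    (∃ s : S, appA φ (.pos x) = (s : WithOne S)) ∧
    (∃ s : S, appA φ (.neg x) = (s : WithOne S)) ∧
    appA φ (.pos x) * appA φ (.neg x) * appA φ (.pos x) = appA φ (.pos x) ∧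
    appA φ (.neg x) * appA φ (.pos x) * appA φ (.neg x) = appA φ (.neg x) ∧
    appG φ (G5.base x) = appA φ (.pos x) * appA φ (.neg x)) ∧
  (∀ a : Anchor X,
    appA φ .one * appA φ a = appA φ a ∧ appA φ a * appA φ .one = appA φ a) ∧
  (∀ (g : G5 X) (i : ℕ), G5.Mem g i → 2 ≤ i →
    ∃ r' l' : WithOne S,
      phiR φ g * r' * phiR φ g = phiR φ g ∧ r' * phiR φ g * r' = r' ∧
      phiL φ g * l' * phiL φ g = phiL φ g ∧ l' * phiL φ g * l' = l' ∧
      appG φ g ∈ sandwichSet (r' * phiR φ g) (phiL φ g * l'))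

end Skeleton



section Counting

variable {X : Type u}

lemma Anchor.inv_injective : Function.Injective (Anchor.inv (X := X)) := by
  intro a b h
  cases a <;> cases b <;> simp [Anchor.inv] at h <;> simp [h]

namespace G5

lemma lt_one : (G5.one : G5 X).lt = G5.one := rfl
lemma rt_one : (G5.one : G5 X).rt = G5.one := rfl

lemma ht_of_mem : ∀ {g : G5 X} {i : ℕ}, Mem g i → g.ht = i := by
  intro g
  induction g with
  | one =>
    intro i h
    cases h with
    | one => rfl
    | ofE h => cases h
    | ofD h => cases h
  | base x =>
    intro i h
    cases h with
    | ofE h => cases h; rfl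
    | ofD h => cases h
  | node l a c b r ihl ihc ihr =>
    intro i h
    cases h with
    | ofE h =>
      cases h with
      | stepL h' => simpa [ht] using ihl (Mem.ofE h')
      | stepR h' => simpa [ht] using ihl (Mem.ofE h')
    | ofD h =>
      cases h with
      | mk hl hc hr hne hla hrb => simpa [ht] using ihl hl

lemma mem_zero {g : G5 X} (h : Mem g 0) : g = G5.one := by
  cases h with
  | one => rfl
  | ofE h => cases h
  | ofD h => cases h

lemma mem_entries {g : G5 X} {i : ℕ} (h : Mem g (i + 1)) :
    Mem g.lt i ∧ Mem g.rt i := by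
  cases h with
  | ofE h =>
    cases h with
    | base x => exact ⟨Mem.one, Mem.one⟩
    | stepL h' => exact ⟨Mem.ofE h', Mem.ofE h'⟩
    | stepR h' => exact ⟨Mem.ofE h', Mem.ofE h'⟩
  | ofD h =>
    cases h with
    | mk hl hc hr hne hla hrb => exact ⟨hl, hr⟩

lemma memE_la_ne_ra : ∀ {g : G5 X} {i : ℕ}, MemE g i → g.la ≠ g.ra := by
  intro g i h
  induction h with
  | base x => simp [la, ra]
  | stepL h ih =>
    simp only [la, ra]
    intro hc
    exact ih (Anchor.inv_injective hc)
  | stepR h ih =>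
    simp only [la, ra]
    intro hc
    exact ih (Anchor.inv_injective hc).symm

lemma two_options_ne {g : G5 X} {n : ℕ} (h : Mem g n) (hn : 1 ≤ n) :
    (g.la, g.lt) ≠ (g.ra, g.rt) := by
  cases h with
  | one => omega
  | ofE h =>
    intro hc
    exact memE_la_ne_ra h (congrArg Prod.fst hc)
  | ofD h =>
    cases h with
    | mk hl hc hr hne hla hrb =>
      intro hcon
      exact hne (congrArg Prod.snd hcon)

end G5

open G5

lemma up_step {g' g : G5 X} {a : Anchor X} {m : ℕ} (hg' : Mem g' m)
    (hht : g.ht = g'.ht + 1) (hA : Anch g' a g) :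
    (g' = g.lt ∧ a = g.la) ∨ (g' = g.rt ∧ a = g.ra) := by
  rcases hA with hL | hR
  · exact hL
  · exfalso
    cases m with
    | zero =>
      have h1 := mem_zero hg'
      subst h1
      rcases hR with ⟨e, _⟩ | ⟨e, _⟩ <;>
        simp only [e, lt_one, rt_one] at hht <;> simp [G5.ht] at hht
    | succ j =>
      obtain ⟨h1, h2⟩ := mem_entries hg'
      have hm := ht_of_mem hg'
      rcases hR with ⟨e, _⟩ | ⟨e, _⟩
      · have := ht_of_mem h1; rw [e] at hht; omega
      · have := ht_of_mem h2; rw [e] at hht; omega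

lemma down_step {g h : G5 X} {a : Anchor X} {m : ℕ} (hh : Mem h m)
    (hht : h.ht + 1 = g.ht) (hA : Anch g a h) :
    (h = g.lt ∧ a = g.la.inv) ∨ (h = g.rt ∧ a = g.ra.inv) := by
  rcases hA with hL | hR
  · exfalso
    cases m with
    | zero =>
      have h1 := mem_zero hh
      subst h1
      rcases hL with ⟨e, _⟩ | ⟨e, _⟩ <;>
        simp only [e, lt_one, rt_one] at hht <;> simp [G5.ht] at hht
    | succ j =>
      obtain ⟨h1, h2⟩ := mem_entries hh
      have hm := ht_of_mem hh
      rcases hL with ⟨e, _⟩ | ⟨e, _⟩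
      · have := ht_of_mem h1; rw [e] at hht; omega
      · have := ht_of_mem h2; rw [e] at hht; omega
  · exact hR

lemma endAt_nil (g : G5 X) : endAt g ([] : List (Anchor X × G5 X)) = g := rfl

lemma endAt_cons (g : G5 X) (p : Anchor X × G5 X) (t : List (Anchor X × G5 X)) :
    endAt g (p :: t) = endAt p.2 t := by
  obtain ⟨a, h⟩ := p
  show (List.map Prod.snd ((a, h) :: t)).getLastD g = _
  rw [List.map_cons, List.getLastD_cons]
  rfl

lemma endAt_append (g : G5 X) (t s : List (Anchor X × G5 X)) :
    endAt g (t ++ s) = endAt (endAt g t) s := by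
  induction t generalizing g with
  | nil => simp [endAt_nil]
  | cons p t ih => simp [endAt_cons, ih]

lemma endAt_concat (g : G5 X) (t : List (Anchor X × G5 X)) (p : Anchor X × G5 X) :
    endAt g (t ++ [p]) = p.2 := by
  rw [endAt_append, endAt_cons, endAt_nil]

lemma endAt_mem (g : G5 X) (t : List (Anchor X × G5 X)) :
    endAt g t ∈ g :: t.map Prod.snd := by
  simp only [endAt]
  exact List.getLastD_mem_cons

lemma chainAnch_append {g : G5 X} {t s : List (Anchor X × G5 X)} :
    ChainAnch g (t ++ s) ↔ ChainAnch g t ∧ ChainAnch (endAt g t) s := by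
  induction t generalizing g with
  | nil => simp [ChainAnch, endAt_nil]
  | cons p t ih =>
    obtain ⟨a, h⟩ := p
    simp [ChainAnch, ih, endAt_cons, and_assoc]

lemma chainUp_append {g : G5 X} {t s : List (Anchor X × G5 X)} :
    ChainUp g (t ++ s) ↔ ChainUp g t ∧ ChainUp (endAt g t) s := by
  induction t generalizing g with
  | nil => simp [ChainUp, endAt_nil]
  | cons p t ih =>
    obtain ⟨a, h⟩ := p
    simp [ChainUp, ih, endAt_cons, and_assoc]

lemma chainUp_ht {g : G5 X} {t : List (Anchor X × G5 X)} (h : ChainUp g t) :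
    (endAt g t).ht = g.ht + t.length := by
  induction t generalizing g with
  | nil => simp [endAt_nil]
  | cons p t ih =>
    obtain ⟨a, h'⟩ := p
    obtain ⟨h1, h2⟩ := h
    rw [endAt_cons]
    have h3 := ih h2
    simp only [List.length_cons]
    omega

lemma chainDown_ht {g : G5 X} {t : List (Anchor X × G5 X)} (h : ChainDown g t) :
    (endAt g t).ht + t.length = g.ht := by
  induction t generalizing g with
  | nil => simp [endAt_nil]
  | cons p t ih =>
    obtain ⟨a, h'⟩ := p
    obtain ⟨h1, h2⟩ := h
    rw [endAt_cons]
    have h3 := ih h2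
    simp only [List.length_cons]
    omega

lemma upPre_eq_of {g : G5 X} : ∀ {utl dtl : List (Anchor X × G5 X)},
    ChainUp g utl → ChainDown (endAt g utl) dtl → upPre g (utl ++ dtl) = utl := by
  intro utl
  induction utl generalizing g with
  | nil =>
    intro dtl _ hd
    cases dtl with
    | nil => rfl
    | cons p rest =>
      obtain ⟨a, h⟩ := p
      obtain ⟨h1, _⟩ := hd
      rw [endAt_nil] at h1
      simp only [List.nil_append, upPre]
      rw [if_neg (by omega)]
  | cons p t ihp =>
    intro dtl hu hd
    obtain ⟨a, h⟩ := p
    obtain ⟨h1, h2⟩ := hu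
    rw [endAt_cons] at hd
    simp only [List.cons_append, upPre, List.append_eq]
    rw [if_pos h1]
    rw [ihp h2 hd]
end Counting


section Counting2

variable {X : Type u}

open G5

/-- tails of uphills from `1` to `g` -/
def upTails : G5 X → List (List (Anchor X × G5 X))
  | G5.one => [[]]
  | G5.base x => [[(Anchor.one, G5.base x)], [(Anchor.neg x, G5.base x)]]
  | G5.node l a c b r =>
      (upTails l).map (· ++ [(a, G5.node l a c b r)]) ++
      (upTails r).map (· ++ [(b, G5.node l a c b r)])

lemma upTails_eq {g : G5 X} (hne : g ≠ G5.one) :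
    upTails g = (upTails g.lt).map (· ++ [(g.la, g)]) ++
      (upTails g.rt).map (· ++ [(g.ra, g)]) := by
  cases g with
  | one => exact absurd rfl hne
  | base x => rfl
  | node l a c b r => rfl

/-- tails of downhills from `g` to `1` -/
def downTails : G5 X → List (List (Anchor X × G5 X))
  | G5.one => [[]]
  | G5.base x => [[(Anchor.one, G5.one)], [(Anchor.pos x, G5.one)]]
  | G5.node l a c b r =>
      (downTails l).map ((a.inv, l) :: ·) ++ (downTails r).map ((b.inv, r) :: ·)

lemma downTails_eq {g : G5 X} (hne : g ≠ G5.one) :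
    downTails g = (downTails g.lt).map ((g.la.inv, g.lt) :: ·) ++
      (downTails g.rt).map ((g.ra.inv, g.rt) :: ·) := by
  cases g with
  | one => exact absurd rfl hne
  | base x => rfl
  | node l a c b r => rfl

def UTp (g : G5 X) (t : List (Anchor X × G5 X)) : Prop :=
  (Landscape.mk G5.one t).IsUphill ∧ endAt G5.one t = g

def DTp (g : G5 X) (t : List (Anchor X × G5 X)) : Prop :=
  (Landscape.mk g t).IsDownhill ∧ endAt g t = G5.one

lemma mem_ne_one {g : G5 X} {n : ℕ} (hg : Mem g n) (hn : 1 ≤ n) : g ≠ G5.one := by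
  intro e
  subst e
  have := ht_of_mem hg
  simp [G5.ht] at this
  omega

lemma upMain : ∀ (n : ℕ) (g : G5 X), Mem g n →
    (∀ t, UTp g t ↔ t ∈ upTails g) ∧ (upTails g).Nodup ∧ (upTails g).length = 2 ^ n := by
  intro n
  induction n with
  | zero =>
    intro g hg
    have hone := mem_zero hg
    subst hone
    refine ⟨?_, by simp [upTails], by simp [upTails]⟩
    intro t
    simp only [upTails, List.mem_singleton]
    constructor
    · rintro ⟨⟨_, hup⟩, hend⟩
      cases t with
      | nil => rfl
      | cons p rest =>
        exfalso
        have hlen := chainUp_ht (g := G5.one) (t := p :: rest) hup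
        rw [hend] at hlen
        simp [G5.ht] at hlen
    · rintro rfl
      refine ⟨⟨⟨?_, trivial⟩, trivial⟩, rfl⟩
      intro x hx
      simp [Landscape.letters] at hx
      subst hx
      exact ⟨0, Mem.one⟩
  | succ k ih =>
    intro g hg
    obtain ⟨hml, hmr⟩ := mem_entries hg
    obtain ⟨ihl_iff, ihl_nd, ihl_len⟩ := ih g.lt hml
    obtain ⟨ihr_iff, ihr_nd, ihr_len⟩ := ih g.rt hmr
    have hgne : g ≠ G5.one := mem_ne_one hg (by omega)
    have hiff : ∀ t, UTp g t ↔ t ∈ upTails g := by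
      intro t
      rw [upTails_eq hgne]
      constructor
      · rintro ⟨⟨⟨hlet, hanch⟩, hup⟩, hend⟩
        have hlen : (endAt G5.one t).ht = t.length := by
          simpa [G5.ht] using chainUp_ht hup
        rw [hend, ht_of_mem hg] at hlen
        rcases List.eq_nil_or_concat t with rfl | ⟨t', p, rfl⟩
        · simp at hlen
        · obtain ⟨a, h⟩ := p
          simp only [List.concat_eq_append] at hlet hanch hup hend hlen ⊢
          have hh : h = g := by rw [endAt_concat] at hend; exact hend
          subst hh
          obtain ⟨hup', hstep⟩ := chainUp_append.mp hup
          obtain ⟨hanch', hstep2⟩ := chainAnch_append.mp hanch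
          have hg'mem : (endAt G5.one t').InG' := by
            apply hlet
            have hmm := endAt_mem G5.one t'
            simp only [Landscape.letters, List.map_append, List.mem_cons,
              List.mem_append] at hmm ⊢
            tauto
          obtain ⟨m, hm⟩ := hg'mem
          have hsteph : G5.ht h = G5.ht (endAt G5.one t') + 1 := hstep.1
          have hancht : Anch (endAt G5.one t') a h := hstep2.1
          rcases up_step hm hsteph hancht with ⟨e1, e2⟩ | ⟨e1, e2⟩
          · have ht' : t' ∈ upTails h.lt := by
              apply (ihl_iff t').mp
              exact ⟨⟨⟨fun x hx => hlet x (by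
                simp only [Landscape.letters, List.map_append, List.mem_cons,
                  List.mem_append] at hx ⊢; tauto), hanch'⟩, hup'⟩, by rw [← e1]⟩
            apply List.mem_append_left
            rw [e2]
            exact List.mem_map_of_mem ht'
          · have ht' : t' ∈ upTails h.rt := by
              apply (ihr_iff t').mp
              exact ⟨⟨⟨fun x hx => hlet x (by
                simp only [Landscape.letters, List.map_append, List.mem_cons,
                  List.mem_append] at hx ⊢; tauto), hanch'⟩, hup'⟩, by rw [← e1]⟩
            apply List.mem_append_right
            rw [e2]
            exact List.mem_map_of_mem ht'
      · intro htm
        rcases List.mem_append.mp htm with hmem | hmem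
        · obtain ⟨t', ht', rfl⟩ := List.mem_map.mp hmem
          obtain ⟨⟨⟨hlet, hanch⟩, hup⟩, hend⟩ := (ihl_iff t').mpr ht'
          refine ⟨⟨⟨?_, ?_⟩, ?_⟩, ?_⟩
          · intro x hx
            simp only [Landscape.letters, List.map_append, List.mem_cons,
              List.mem_append] at hx
            rcases hx with rfl | hx | hx
            · exact ⟨0, Mem.one⟩
            · exact hlet x (by simp [Landscape.letters, hx])
            · simp at hx
              subst hx
              exact ⟨k + 1, hg⟩
          · rw [chainAnch_append]
            refine ⟨hanch, ⟨Or.inl (Or.inl ⟨by rw [hend], rfl⟩), trivial⟩⟩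
          · rw [chainUp_append]
            refine ⟨hup, ⟨?_, trivial⟩⟩
            rw [hend, ht_of_mem hg, ht_of_mem hml]
          · exact endAt_concat _ _ _
        · obtain ⟨t', ht', rfl⟩ := List.mem_map.mp hmem
          obtain ⟨⟨⟨hlet, hanch⟩, hup⟩, hend⟩ := (ihr_iff t').mpr ht'
          refine ⟨⟨⟨?_, ?_⟩, ?_⟩, ?_⟩
          · intro x hx
            simp only [Landscape.letters, List.map_append, List.mem_cons,
              List.mem_append] at hx
            rcases hx with rfl | hx | hx
            · exact ⟨0, Mem.one⟩
            · exact hlet x (by simp [Landscape.letters, hx])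
            · simp at hx
              subst hx
              exact ⟨k + 1, hg⟩
          · rw [chainAnch_append]
            refine ⟨hanch, ⟨Or.inl (Or.inr ⟨by rw [hend], rfl⟩), trivial⟩⟩
          · rw [chainUp_append]
            refine ⟨hup, ⟨?_, trivial⟩⟩
            rw [hend, ht_of_mem hg, ht_of_mem hmr]
          · exact endAt_concat _ _ _
    refine ⟨hiff, ?_, ?_⟩
    · rw [upTails_eq hgne]
      have hinj1 : Function.Injective fun t : List (Anchor X × G5 X) => t ++ [(g.la, g)] := by
        intro x y hxy
        exact (List.append_inj hxy (by
          have := congrArg List.length hxy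
          simpa using this)).1
      have hinj2 : Function.Injective fun t : List (Anchor X × G5 X) => t ++ [(g.ra, g)] := by
        intro x y hxy
        exact (List.append_inj hxy (by
          have := congrArg List.length hxy
          simpa using this)).1
      refine List.Nodup.append (ihl_nd.map hinj1) (ihr_nd.map hinj2) ?_
      intro t h1 h2
      obtain ⟨t1, ht1, he1⟩ := List.mem_map.mp h1
      obtain ⟨t2, ht2, he2⟩ := List.mem_map.mp h2
      have he : t1 ++ [(g.la, g)] = t2 ++ [(g.ra, g)] := by rw [he1, he2]
      obtain ⟨hts, hps⟩ := List.append_inj' he rfl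
      have hps' : (g.la, g) = (g.ra, g) := by simpa using hps
      have e1 : endAt G5.one t1 = g.lt := ((ihl_iff t1).mpr ht1).2
      have e2 : endAt G5.one t2 = g.rt := ((ihr_iff t2).mpr ht2).2
      have hla : g.la = g.ra := congrArg Prod.fst hps'
      have hlr : g.lt = g.rt := by rw [← e1, ← e2, hts]
      exact two_options_ne hg (by omega) (by rw [hla, hlr])
    · rw [upTails_eq hgne]
      simp only [List.length_append, List.length_map, ihl_len, ihr_len]
      rw [pow_succ]
      omega

lemma downMain : ∀ (n : ℕ) (g : G5 X), Mem g n →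
    (∀ t, DTp g t ↔ t ∈ downTails g) ∧ (downTails g).Nodup ∧
      (downTails g).length = 2 ^ n := by
  intro n
  induction n with
  | zero =>
    intro g hg
    have hone := mem_zero hg
    subst hone
    refine ⟨?_, by simp [downTails], by simp [downTails]⟩
    intro t
    simp only [downTails, List.mem_singleton]
    constructor
    · rintro ⟨⟨_, hdown⟩, hend⟩
      have hlen := chainDown_ht (g := G5.one) (t := t) hdown
      rw [hend] at hlen
      simpa [G5.ht] using hlen
    · rintro rfl
      refine ⟨⟨⟨?_, trivial⟩, trivial⟩, rfl⟩
      intro x hx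
      simp [Landscape.letters] at hx
      subst hx
      exact ⟨0, Mem.one⟩
  | succ k ih =>
    intro g hg
    obtain ⟨hml, hmr⟩ := mem_entries hg
    obtain ⟨ihl_iff, ihl_nd, ihl_len⟩ := ih g.lt hml
    obtain ⟨ihr_iff, ihr_nd, ihr_len⟩ := ih g.rt hmr
    have hgne : g ≠ G5.one := mem_ne_one hg (by omega)
    have hiff : ∀ t, DTp g t ↔ t ∈ downTails g := by
      intro t
      rw [downTails_eq hgne]
      constructor
      · rintro ⟨⟨⟨hlet, hanch⟩, hdown⟩, hend⟩
        replace hanch : ChainAnch g t := hanch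
        replace hdown : ChainDown g t := hdown
        have hlen := chainDown_ht (g := g) (t := t) hdown
        rw [hend, ht_of_mem hg] at hlen
        simp only [G5.ht] at hlen
        cases t with
        | nil => simp at hlen
        | cons p t' =>
          obtain ⟨a, h⟩ := p
          obtain ⟨h1, h2⟩ := hdown
          obtain ⟨ha1, ha2⟩ := hanch
          have hhmem : h.InG' := by
            apply hlet
            simp [Landscape.letters]
          obtain ⟨m, hm⟩ := hhmem
          rw [endAt_cons] at hend
          rcases down_step hm h1 ha1 with ⟨e1, e2⟩ | ⟨e1, e2⟩
          · subst e1; subst e2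
            apply List.mem_append_left
            apply List.mem_map_of_mem
            apply (ihl_iff t').mp
            refine ⟨⟨⟨?_, ha2⟩, h2⟩, hend⟩
            intro x hx
            apply hlet
            simp only [Landscape.letters, List.mem_cons, List.map_cons] at hx ⊢
            tauto
          · subst e1; subst e2
            apply List.mem_append_right
            apply List.mem_map_of_mem
            apply (ihr_iff t').mp
            refine ⟨⟨⟨?_, ha2⟩, h2⟩, hend⟩
            intro x hx
            apply hlet
            simp only [Landscape.letters, List.mem_cons, List.map_cons] at hx ⊢
            tauto
      · intro htm
        rcases List.mem_append.mp htm with hmem | hmem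
        · obtain ⟨t', ht', rfl⟩ := List.mem_map.mp hmem
          obtain ⟨⟨⟨hlet, hanch⟩, hdown⟩, hend⟩ := (ihl_iff t').mpr ht'
          refine ⟨⟨⟨?_, ⟨Or.inr (Or.inl ⟨rfl, rfl⟩), hanch⟩⟩,
            ⟨by rw [ht_of_mem hg, ht_of_mem hml], hdown⟩⟩, by rw [endAt_cons]; exact hend⟩
          intro x hx
          simp only [Landscape.letters, List.mem_cons, List.map_cons] at hx
          rcases hx with rfl | hx
          · exact ⟨k + 1, hg⟩
          · exact hlet x (by
              simp only [Landscape.letters, List.mem_cons]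
              exact hx)
        · obtain ⟨t', ht', rfl⟩ := List.mem_map.mp hmem
          obtain ⟨⟨⟨hlet, hanch⟩, hdown⟩, hend⟩ := (ihr_iff t').mpr ht'
          refine ⟨⟨⟨?_, ⟨Or.inr (Or.inr ⟨rfl, rfl⟩), hanch⟩⟩,
            ⟨by rw [ht_of_mem hg, ht_of_mem hmr], hdown⟩⟩, by rw [endAt_cons]; exact hend⟩
          intro x hx
          simp only [Landscape.letters, List.mem_cons, List.map_cons] at hx
          rcases hx with rfl | hx
          · exact ⟨k + 1, hg⟩
          · exact hlet x (by
              simp only [Landscape.letters, List.mem_cons]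
              exact hx)
    refine ⟨hiff, ?_, ?_⟩
    · rw [downTails_eq hgne]
      have hinj1 : Function.Injective
          fun t : List (Anchor X × G5 X) => (g.la.inv, g.lt) :: t := by
        intro x y hxy; simpa using hxy
      have hinj2 : Function.Injective
          fun t : List (Anchor X × G5 X) => (g.ra.inv, g.rt) :: t := by
        intro x y hxy; simpa using hxy
      refine List.Nodup.append (ihl_nd.map hinj1) (ihr_nd.map hinj2) ?_
      intro t h1 h2
      obtain ⟨t1, ht1, he1⟩ := List.mem_map.mp h1
      obtain ⟨t2, ht2, he2⟩ := List.mem_map.mp h2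
      have he : (g.la.inv, g.lt) :: t1 = (g.ra.inv, g.rt) :: t2 := by rw [he1, he2]
      simp only [List.cons.injEq, Prod.mk.injEq] at he
      obtain ⟨⟨hea, heg⟩, -⟩ := he
      exact two_options_ne hg (by omega)
        (by rw [Anchor.inv_injective hea, heg])
    · rw [downTails_eq hgne]
      simp only [List.length_append, List.length_map, ihl_len, ihr_len]
      rw [pow_succ]
      omega

open Classical in
/-- the single letter corresponding to `g ∈ 𝒢'` -/
noncomputable def gLet (h : G5 X) : Letter X :=
  if hh : h.IsTup then Sum.inr ⟨h, hh⟩ else Sum.inl Anchor.one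

lemma wG_eq_of (h : G5 X) : wG h = FreeSemigroup.of (gLet h) := by
  by_cases hh : h.IsTup <;> simp [wG, gLet, wA, hh]

/-- encoding of landscape tails as letter lists -/
noncomputable def encode (t : List (Anchor X × G5 X)) : List (Letter X) :=
  t.flatMap fun p => [Sum.inl p.1, gLet p.2]

lemma word_eq (h : G5 X) (t : List (Anchor X × G5 X)) :
    (Landscape.mk h t).word = ⟨gLet h, encode t⟩ := by
  suffices H : ∀ (t : List (Anchor X × G5 X)) (w : W X),
      List.foldl (fun w p => w * wA p.1 * wG p.2) w t = ⟨w.head, w.tail ++ encode t⟩ by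
    have h2 := H t (wG h)
    simp only [Landscape.word]
    rw [h2, wG_eq_of]
    simp [encode]
  intro t
  induction t with
  | nil => intro w; simp [encode]
  | cons p t ih =>
    intro w
    rw [List.foldl_cons, ih, wG_eq_of]
    apply FreeSemigroup.ext
    · simp [wA]
    · simp [wA, encode, FreeSemigroup.of]
      rfl

lemma not_isTup_eq_one {h : G5 X} (hi : h.InG') (hn : ¬ h.IsTup) : h = G5.one := by
  obtain ⟨i, hm⟩ := hi
  cases i with
  | zero => exact mem_zero hm
  | succ j => exact absurd ⟨j + 1, by omega, hm⟩ hn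

lemma gLet_inj {h₁ h₂ : G5 X} (i1 : h₁.InG') (i2 : h₂.InG')
    (e : gLet h₁ = gLet h₂) : h₁ = h₂ := by
  unfold gLet at e
  by_cases hh1 : h₁.IsTup <;> by_cases hh2 : h₂.IsTup <;>
    simp only [hh1, hh2, ↓reduceDIte] at e
  · exact congrArg Subtype.val (Sum.inr.inj e)
  · exact absurd e (by simp)
  · exact absurd e (by simp)
  · rw [not_isTup_eq_one i1 (by assumption), not_isTup_eq_one i2 (by assumption)]

lemma encode_inj : ∀ {t₁ t₂ : List (Anchor X × G5 X)},
    (∀ p ∈ t₁, (Prod.snd p).InG') → (∀ p ∈ t₂, (Prod.snd p).InG') →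
    encode t₁ = encode t₂ → t₁ = t₂ := by
  intro t₁
  induction t₁ with
  | nil =>
    intro t₂ _ _ e
    cases t₂ with
    | nil => rfl
    | cons p t => simp [encode] at e
  | cons p t ih =>
    intro t₂ h1 h2 e
    cases t₂ with
    | nil => simp [encode] at e
    | cons q s =>
      obtain ⟨a, h⟩ := p
      obtain ⟨b, h'⟩ := q
      simp only [encode, List.flatMap_cons, List.cons_append, List.nil_append] at e
      injection e with e1 e2
      injection e2 with e2 e3
      have ha : a = b := Sum.inl.inj e1
      have hh : h = h' := gLet_inj (h1 (a, h) (by simp)) (h2 (b, h') (by simp)) e2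
      have ht := ih (fun p hp => h1 p (by simp [hp])) (fun p hp => h2 p (by simp [hp])) e3
      rw [ha, hh, ht]

lemma word_inj {h : G5 X} {t₁ t₂ : List (Anchor X × G5 X)}
    (h1 : ∀ p ∈ t₁, (Prod.snd p).InG') (h2 : ∀ p ∈ t₂, (Prod.snd p).InG')
    (e : (Landscape.mk h t₁).word = (Landscape.mk h t₂).word) : t₁ = t₂ := by
  rw [word_eq, word_eq] at e
  exact encode_inj h1 h2 (congrArg FreeSemigroup.tail e)

lemma UTp_letters {g : G5 X} {t : List (Anchor X × G5 X)} (h : UTp g t) :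
    ∀ p ∈ t, (Prod.snd p).InG' := by
  intro p hp
  exact h.1.1.1 p.2 (List.mem_cons_of_mem _ (List.mem_map_of_mem hp))

lemma DTp_letters {g : G5 X} {t : List (Anchor X × G5 X)} (h : DTp g t) :
    ∀ p ∈ t, (Prod.snd p).InG' := by
  intro p hp
  exact h.1.1.1 p.2 (List.mem_cons_of_mem _ (List.mem_map_of_mem hp))

lemma UTp_length {g : G5 X} {n : ℕ} {t : List (Anchor X × G5 X)}
    (hg : Mem g n) (h : UTp g t) : t.length = n := by
  have h2 := chainUp_ht (g := G5.one) (t := t) h.1.2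
  rw [h.2, ht_of_mem hg] at h2
  simpa [G5.ht] using h2.symm

lemma DTp_length {g : G5 X} {n : ℕ} {t : List (Anchor X × G5 X)}
    (hg : Mem g n) (h : DTp g t) : t.length = n := by
  have h2 := chainDown_ht (g := g) (t := t) h.1.2
  rw [h.2, ht_of_mem hg] at h2
  simpa [G5.ht] using h2

lemma peak_of (tu td : List (Anchor X × G5 X)) (hu : ChainUp G5.one tu)
    (hd : ChainDown (endAt G5.one tu) td) :
    (Landscape.mk G5.one (tu ++ td)).peak = endAt G5.one tu := by
  show endAt G5.one (upPre G5.one (tu ++ td)) = endAt G5.one tu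
  rw [upPre_eq_of hu hd]

end Counting2

/-- For `g ∈ 𝒢_n` there are `2^n` uphills from `1` to `g`, `2^n` downhills from `g` to
`1`, and `2^{2n}` mountains with peak `g`. -/
theorem statement7 (X : Type u) [Nonempty X] (g : G5 X) (n : ℕ)
    (h1 : 1 ≤ n) (hg : G5.Mem g n) :
    Set.ncard {m : W X | ∃ L : Landscape X,
      L.IsUphill ∧ L.head = G5.one ∧ L.last = g ∧ L.word = m} = 2 ^ n ∧
    Set.ncard {m : W X | ∃ L : Landscape X,
      L.IsDownhill ∧ L.head = g ∧ L.last = G5.one ∧ L.word = m} = 2 ^ n ∧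
    Set.ncard {m : W X | ∃ L : Landscape X,
      L.IsMountain ∧ L.peak = g ∧ L.word = m} = 2 ^ (2 * n) := by
  classical
  obtain ⟨hUiff, hUnd, hUlen⟩ := upMain n g hg
  obtain ⟨hDiff, hDnd, hDlen⟩ := downMain n g hg
  refine ⟨?_, ?_, ?_⟩
  · have e1 : {m : W X | ∃ L : Landscape X,
        L.IsUphill ∧ L.head = G5.one ∧ L.last = g ∧ L.word = m}
        = ↑(((upTails g).toFinset).image fun t => (Landscape.mk G5.one t).word) := by
      ext m
      simp only [Set.mem_setOf_eq, Finset.coe_image, Set.mem_image,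
        Finset.mem_coe, List.mem_toFinset]
      constructor
      · rintro ⟨⟨h0, t0⟩, hup, hhead, hlast, rfl⟩
        have hh : h0 = G5.one := hhead
        subst hh
        exact ⟨t0, (hUiff t0).mp ⟨hup, hlast⟩, rfl⟩
      · rintro ⟨t, htm, rfl⟩
        have hu := (hUiff t).mpr htm
        exact ⟨⟨G5.one, t⟩, hu.1, rfl, hu.2, rfl⟩
    have hinj : Set.InjOn (fun t : List (Anchor X × G5 X) => (Landscape.mk G5.one t).word)
        ↑(upTails g).toFinset := by
      intro t1 h1 t2 h2 he
      simp only [Finset.mem_coe, List.mem_toFinset] at h1 h2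
      exact word_inj (UTp_letters ((hUiff t1).mpr h1))
        (UTp_letters ((hUiff t2).mpr h2)) he
    rw [e1, Set.ncard_coe_finset, Finset.card_image_of_injOn hinj,
      List.toFinset_card_of_nodup hUnd, hUlen]
  · have e2 : {m : W X | ∃ L : Landscape X,
        L.IsDownhill ∧ L.head = g ∧ L.last = G5.one ∧ L.word = m}
        = ↑(((downTails g).toFinset).image fun t => (Landscape.mk g t).word) := by
      ext m
      simp only [Set.mem_setOf_eq, Finset.coe_image, Set.mem_image,
        Finset.mem_coe, List.mem_toFinset]
      constructor
      · rintro ⟨⟨h0, t0⟩, hdn, hhead, hlast, rfl⟩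
        have hh : h0 = g := hhead
        subst hh
        exact ⟨t0, (hDiff t0).mp ⟨hdn, hlast⟩, rfl⟩
      · rintro ⟨t, htm, rfl⟩
        have hu := (hDiff t).mpr htm
        exact ⟨⟨g, t⟩, hu.1, rfl, hu.2, rfl⟩
    have hinj : Set.InjOn (fun t : List (Anchor X × G5 X) => (Landscape.mk g t).word)
        ↑(downTails g).toFinset := by
      intro t1 h1 t2 h2 he
      simp only [Finset.mem_coe, List.mem_toFinset] at h1 h2
      exact word_inj (DTp_letters ((hDiff t1).mpr h1))
        (DTp_letters ((hDiff t2).mpr h2)) he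
    rw [e2, Set.ncard_coe_finset, Finset.card_image_of_injOn hinj,
      List.toFinset_card_of_nodup hDnd, hDlen]
  · have e3 : {m : W X | ∃ L : Landscape X,
        L.IsMountain ∧ L.peak = g ∧ L.word = m}
        = ↑((((upTails g).toFinset ×ˢ (downTails g).toFinset)).image
            fun p => (Landscape.mk G5.one (p.1 ++ p.2)).word) := by
      ext m
      simp only [Set.mem_setOf_eq, Finset.coe_image, Set.mem_image,
        Finset.mem_coe, Finset.mem_product, List.mem_toFinset]
      constructor
      · rintro ⟨⟨h0, t0⟩, ⟨hls, hhead, hcase⟩, hpk, rfl⟩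
        have hh : h0 = G5.one := hhead
        subst hh
        rcases hcase with hnil | ⟨utl, dtl, heq, hune, hdne, hcu, hcd, hlast⟩
        · exfalso
          subst hnil
          have hpk1 : G5.one = g := hpk
          have h2 := G5.ht_of_mem hg
          rw [← hpk1] at h2
          simp [G5.ht] at h2
          omega
        · subst heq
          have hpk' := peak_of utl dtl hcu hcd
          have hgg : endAt G5.one utl = g := hpk'.symm.trans hpk
          obtain ⟨hlet, hanch⟩ := hls
          replace hanch : ChainAnch G5.one (utl ++ dtl) := hanch
          have hansp := chainAnch_append.mp hanch
          have hut : UTp g utl := by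
            refine ⟨⟨⟨?_, hansp.1⟩, hcu⟩, hgg⟩
            intro x hx
            apply hlet
            simp only [Landscape.letters, List.map_append, List.mem_cons,
              List.mem_append] at hx ⊢
            tauto
          have hdt : DTp g dtl := by
            refine ⟨⟨⟨?_, ?_⟩, ?_⟩, ?_⟩
            · intro x hx
              apply hlet
              simp only [Landscape.letters, List.map_append, List.mem_cons,
                List.mem_append] at hx ⊢
              rcases hx with rfl | hx
              · have hmm := endAt_mem G5.one utl
                rw [hgg] at hmm
                simp only [List.mem_cons] at hmm
                tauto
              · tauto
            · rw [← hgg]; exact hansp.2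
            · rw [← hgg]; exact hcd
            · have hl : endAt G5.one (utl ++ dtl) = G5.one := hlast
              rw [endAt_append, hgg] at hl
              exact hl
          exact ⟨(utl, dtl), ⟨(hUiff utl).mp hut, (hDiff dtl).mp hdt⟩, rfl⟩
      · rintro ⟨⟨tu, td⟩, ⟨htu, htd⟩, rfl⟩
        have hut := (hUiff tu).mpr htu
        have hdt := (hDiff td).mpr htd
        have htu_len := UTp_length hg hut
        have htd_len := DTp_length hg hdt
        have hcd' : ChainDown (endAt G5.one tu) td := by
          rw [hut.2]; exact hdt.1.2
        refine ⟨⟨G5.one, tu ++ td⟩, ⟨⟨?_, ?_⟩, rfl,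
          Or.inr ⟨tu, td, rfl, ?_, ?_, hut.1.2, hcd', ?_⟩⟩, ?_, rfl⟩
        · intro x hx
          simp only [Landscape.letters, List.map_append, List.mem_cons,
            List.mem_append] at hx
          rcases hx with rfl | hx | hx
          · exact ⟨0, G5.Mem.one⟩
          · exact hut.1.1.1 x
              (by simp only [Landscape.letters, List.mem_cons]; tauto)
          · exact hdt.1.1.1 x
              (by simp only [Landscape.letters, List.mem_cons]; tauto)
        · show ChainAnch G5.one (tu ++ td)
          exact chainAnch_append.mpr ⟨hut.1.1.2, by rw [hut.2]; exact hdt.1.1.2⟩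
        · intro e; rw [e] at htu_len; simp at htu_len; omega
        · intro e; rw [e] at htd_len; simp at htd_len; omega
        · show endAt G5.one (tu ++ td) = G5.one
          rw [endAt_append, hut.2]
          exact hdt.2
        · show (Landscape.mk G5.one (tu ++ td)).peak = g
          rw [peak_of tu td hut.1.2 hcd', hut.2]
    have hinj3 : Set.InjOn
        (fun p : List (Anchor X × G5 X) × List (Anchor X × G5 X) =>
          (Landscape.mk G5.one (p.1 ++ p.2)).word)
        ↑((upTails g).toFinset ×ˢ (downTails g).toFinset) := by
      rintro ⟨tu1, td1⟩ hp1 ⟨tu2, td2⟩ hp2 he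
      simp only [Finset.coe_product, Set.mem_prod, Finset.mem_coe,
        List.mem_toFinset] at hp1 hp2
      have h1u := (hUiff tu1).mpr hp1.1
      have h1d := (hDiff td1).mpr hp1.2
      have h2u := (hUiff tu2).mpr hp2.1
      have h2d := (hDiff td2).mpr hp2.2
      have hle : tu1 ++ td1 = tu2 ++ td2 := by
        apply word_inj ?_ ?_ he
        · intro p hp
          rcases List.mem_append.mp hp with h | h
          · exact UTp_letters h1u p h
          · exact DTp_letters h1d p h
        · intro p hp
          rcases List.mem_append.mp hp with h | h
          · exact UTp_letters h2u p h
          · exact DTp_letters h2d p h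
      have hlen : tu1.length = tu2.length := by
        rw [UTp_length hg h1u, UTp_length hg h2u]
      obtain ⟨f1, f2⟩ := List.append_inj hle hlen
      simp [f1, f2]
    rw [e3, Set.ncard_coe_finset, Finset.card_image_of_injOn hinj3,
      Finset.card_product, List.toFinset_card_of_nodup hUnd,
      List.toFinset_card_of_nodup hDnd, hUlen, hDlen, two_mul, pow_add]

end Paper
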